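/- Let ε > 0, let B : ℂ → ℂ be holomorphic on the disk D(0,ε), let P : ℂ → ℂ satisfy P'(z) = B(z) for all z ∈ D(0,ε), let b ∈ ℂ with b ≠ 0 and |b| ≠ 1, and let a ∈ ℝ with a ≠ 0. For 0 < |z| < ε define G(z) = b/z + a·z + z²·B(z) and ψ(z) = ( G(z) + 1/conj(z), ½(|G(z)|² − 1/|z|²) + Re(G(z)/z) − 2a·log|z| − Re(b/z²) − 2·Re(z·B(z) + P(z)) ) ∈ ℂ × ℝ, and the non-rotational end ψ̃_NR(z) = ( a·z + b/z + 1/conj(z), ½(a²|z|² + |b|²/|z|² − 1/|z|²) − 2a·log|z| + a·Re(b·conj(z)/z) ). Then there exists v ∈ ℂ × ℝ such that ψ(z) − ψ̃_NR(z) → v as z → 0 (z ≠ 0); i.e., the end is asymptotic to a type-NR end. -/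

import Mathlib

open Complex Filter Topology

/-- The surface `ψ` of a normalized complete embedded end of an improper affine front
with Weierstrass data `F = 1/z`, `G = b/z + a·z + z²·B(z)`. -/
noncomputable def psiEndNR (B P : ℂ → ℂ) (b : ℂ) (a : ℝ) (z : ℂ) : ℂ × ℝ :=
  (b / z + (a : ℂ) * z + z ^ 2 * B z + 1 / (starRingEnd ℂ) z,
    (1 / 2 : ℝ) * (‖b / z + (a : ℂ) * z + z ^ 2 * B z‖ ^ 2
        - 1 / ‖z‖ ^ 2)
      + ((b / z + (a : ℂ) * z + z ^ 2 * B z) / z).re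
      - 2 * a * Real.log (‖z‖)
      - (b / z ^ 2).re
      - 2 * (z * B z + P z).re)

/-- The non-rotational (type-NR) model end. -/
noncomputable def psiTildeNR (b : ℂ) (a : ℝ) (z : ℂ) : ℂ × ℝ :=
  ((a : ℂ) * z + b / z + 1 / (starRingEnd ℂ) z,
    (1 / 2 : ℝ) * (a ^ 2 * ‖z‖ ^ 2 + ‖b‖ ^ 2 / ‖z‖ ^ 2
        - 1 / ‖z‖ ^ 2)
      - 2 * a * Real.log (‖z‖)
      + a * (b * (starRingEnd ℂ) z / z).re)

theorem end_asymptotic_typeNR (ε : ℝ) (hε : 0 < ε) (B P : ℂ → ℂ)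
    (hB : DifferentiableOn ℂ B (Metric.ball (0 : ℂ) ε))
    (hP : ∀ z ∈ Metric.ball (0 : ℂ) ε, HasDerivAt P (B z) z)
    (b : ℂ) (hb0 : b ≠ 0) (hb1 : ‖b‖ ≠ 1)
    (a : ℝ) (ha : a ≠ 0) :
    ∃ v : ℂ × ℝ,
      Tendsto (fun z : ℂ => psiEndNR B P b a z - psiTildeNR b a z)
        (𝓝[≠] (0 : ℂ)) (𝓝 v) := by

  -- limit value
  refine ⟨(0, a - 2 * (P 0).re), ?_⟩
  have hBc : ContinuousAt B 0 :=
    hB.continuousOn.continuousAt (Metric.ball_mem_nhds _ hε)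
  have hPc : ContinuousAt P 0 := (hP 0 (Metric.mem_ball_self hε)).continuousAt
  -- the simplified form of the difference
  set g : ℂ → ℂ × ℝ := fun z =>
    (z ^ 2 * B z,
      (1 / 2 : ℝ) * ‖z ^ 2 * B z‖ ^ 2
        + ((b / z + (a : ℂ) * z) * (starRingEnd ℂ) (z ^ 2 * B z)).re
        + a - (z * B z).re - 2 * (P z).re) with hg
  have hkey : ∀ z : ℂ, z ≠ 0 → psiEndNR B P b a z - psiTildeNR b a z = g z := by
    intro z hz
    have hpos : 0 < Complex.normSq z := Complex.normSq_pos.mpr hz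
    rw [Complex.normSq_apply] at hpos
    unfold psiEndNR psiTildeNR
    rw [hg]
    refine Prod.ext ?_ ?_
    · simp only [Prod.fst_sub]
      ring
    · simp only [Prod.snd_sub]
      simp only [Complex.sq_norm]
      simp only [Complex.normSq_apply, Complex.add_re, Complex.add_im,
        Complex.mul_re, Complex.mul_im, Complex.div_re, Complex.div_im, Complex.ofReal_re,
        Complex.ofReal_im, pow_two, Complex.conj_re, Complex.conj_im]
      set x := z.re with hx
      set y := z.im with hy
      have hd : x * x + y * y ≠ 0 := ne_of_gt hpos
      have hd4 : (x * x - y * y) * (x * x - y * y) + (x * y + y * x) * (x * y + y * x) ≠ 0 := by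
        have : (x * x - y * y) * (x * x - y * y) + (x * y + y * x) * (x * y + y * x)
            = (x * x + y * y) * (x * x + y * y) := by ring
        rw [this]; exact mul_ne_zero hd hd
      have hd2 : x ^ 2 + y ^ 2 ≠ 0 := by simpa [pow_two] using hd
      have hd5 : x ^ 2 * y ^ 2 * 2 + x ^ 4 + y ^ 4 ≠ 0 := by
        have : x ^ 2 * y ^ 2 * 2 + x ^ 4 + y ^ 4 = (x ^ 2 + y ^ 2) * (x ^ 2 + y ^ 2) := by ring
        rw [this]; exact mul_ne_zero hd2 hd2
      have hd4e : (x * x - y * y) * (x * x - y * y) + (x * y + y * x) * (x * y + y * x)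
          = (x * x + y * y) * (x * x + y * y) := by ring
      rw [hd4e]
      field_simp
      ring
  have hEq : g =ᶠ[𝓝[≠] (0 : ℂ)] fun z => psiEndNR B P b a z - psiTildeNR b a z :=
    eventually_mem_nhdsWithin.mono fun z hz => (hkey z hz).symm
  refine Tendsto.congr' hEq ?_
  -- limits of each piece
  have hT1 : Tendsto (fun z : ℂ => z ^ 2 * B z) (𝓝[≠] (0 : ℂ)) (𝓝 0) := by
    have : Tendsto (fun z : ℂ => z ^ 2 * B z) (𝓝 (0 : ℂ)) (𝓝 ((0 : ℂ) ^ 2 * B 0)) :=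
      ((continuous_pow 2).continuousAt.tendsto).mul hBc.tendsto
    simpa using this.mono_left nhdsWithin_le_nhds
  have hT1' : Tendsto (fun z : ℂ => z * B z) (𝓝[≠] (0 : ℂ)) (𝓝 0) := by
    have : Tendsto (fun z : ℂ => z * B z) (𝓝 (0 : ℂ)) (𝓝 ((0 : ℂ) * B 0)) :=
      continuous_id.continuousAt.tendsto.mul hBc.tendsto
    simpa using this.mono_left nhdsWithin_le_nhds
  -- the cross term tends to 0
  have hcross : Tendsto
      (fun z : ℂ => (b / z + (a : ℂ) * z) * (starRingEnd ℂ) (z ^ 2 * B z))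
      (𝓝[≠] (0 : ℂ)) (𝓝 0) := by
    have hq : Tendsto (fun z : ℂ => ((starRingEnd ℂ) z) ^ 2 / z) (𝓝[≠] (0 : ℂ)) (𝓝 0) := by
      rw [tendsto_zero_iff_norm_tendsto_zero]
      have heq : (fun z : ℂ => ‖((starRingEnd ℂ) z) ^ 2 / z‖) =ᶠ[𝓝[≠] (0 : ℂ)]
          fun z : ℂ => ‖z‖ := by
        refine eventually_mem_nhdsWithin.mono fun z hz => ?_
        have hz' : z ≠ 0 := hz
        have hnz : ‖z‖ ≠ 0 := norm_ne_zero_iff.mpr hz'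
        show ‖(starRingEnd ℂ) z ^ 2 / z‖ = ‖z‖
        rw [norm_div, norm_pow, RCLike.norm_conj]
        field_simp [pow_two]
      refine Tendsto.congr' heq.symm ?_
      simpa using (continuous_norm.tendsto (0 : ℂ)).mono_left
        (nhdsWithin_le_nhds (s := {(0 : ℂ)}ᶜ))
    have hc : Tendsto (fun z : ℂ => (b + (a : ℂ) * z ^ 2) * (starRingEnd ℂ) (B z))
        (𝓝[≠] (0 : ℂ)) (𝓝 ((b + (a : ℂ) * 0 ^ 2) * (starRingEnd ℂ) (B 0))) := by
      refine Tendsto.mono_left ?_ nhdsWithin_le_nhds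
      exact (continuousAt_const.add
        (continuousAt_const.mul ((continuous_pow 2).continuousAt))).tendsto.mul
        ((Complex.continuous_conj.continuousAt.comp hBc).tendsto)
    have hmul := hc.mul hq
    rw [mul_zero] at hmul
    refine Tendsto.congr' ?_ hmul
    refine eventually_mem_nhdsWithin.mono fun z hz => ?_
    have hz' : (z : ℂ) ≠ 0 := hz
    simp only [map_mul, map_pow]
    field_simp
  -- second coordinate tendsto
  have hT2 : Tendsto (fun z : ℂ =>
      (1 / 2 : ℝ) * ‖z ^ 2 * B z‖ ^ 2
        + ((b / z + (a : ℂ) * z) * (starRingEnd ℂ) (z ^ 2 * B z)).re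
        + a - (z * B z).re - 2 * (P z).re)
      (𝓝[≠] (0 : ℂ)) (𝓝 (a - 2 * (P 0).re)) := by
    have h1 : Tendsto (fun z : ℂ => (1 / 2 : ℝ) * ‖z ^ 2 * B z‖ ^ 2)
        (𝓝[≠] (0 : ℂ)) (𝓝 0) := by
      have := ((continuous_norm.tendsto (0 : ℂ)).comp hT1).pow 2
      have h := this.const_mul (1 / 2 : ℝ)
      simpa using h
    have h2 : Tendsto (fun z : ℂ =>
        ((b / z + (a : ℂ) * z) * (starRingEnd ℂ) (z ^ 2 * B z)).re)
        (𝓝[≠] (0 : ℂ)) (𝓝 0) := by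
      have h := (Complex.continuous_re.tendsto (0 : ℂ)).comp hcross
      simpa only [Function.comp_def, Complex.zero_re] using h
    have h3 : Tendsto (fun z : ℂ => (z * B z).re) (𝓝[≠] (0 : ℂ)) (𝓝 0) := by
      have := (Complex.continuous_re.tendsto (0 : ℂ)).comp hT1'
      simpa only [Function.comp_def, Complex.zero_re] using this
    have h4 : Tendsto (fun z : ℂ => 2 * (P z).re) (𝓝[≠] (0 : ℂ)) (𝓝 (2 * (P 0).re)) := by
      have h := ((Complex.continuous_re.tendsto (P 0)).comp hPc.tendsto).const_mul (2 : ℝ)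
      simpa only [Function.comp_def] using h.mono_left nhdsWithin_le_nhds
    have hca : Tendsto (fun _ : ℂ => (a : ℝ)) (𝓝[≠] (0 : ℂ)) (𝓝 (a : ℝ)) :=
      tendsto_const_nhds
    have := (((h1.add h2).add hca).sub h3).sub h4
    simpa using this
  exact hT1.prodMk_nhds hT2
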